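/- arXiv:1503.05988 — 2 statements merged into one kernel-verified Lean document; each statement's English description precedes it below -/
import Mathlib

section
/- In the i.i.d. persuasion model with q_j > 0 for all types j, let (x, y) ∈ [0,1]^m × [0,1]^m and define τ = (x_1/q_1, …, x_m/q_m). The pair (x, y) is a realizable s-signature if and only if (a) ‖x‖_1 = 1/n, (b) x + (n−1)y = q, and (c) τ is a realizable symmetric reduced form of an allocation rule with n i.i.d. bidders, m types, and type distribution q. -/
open Finset

namespace IID

variable {n m : ℕ}

/-- the i.i.d. prior on states `θ ∈ [m]^n`: `λ(θ) = ∏ i, q (θ i)` -/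
def prior (q : Fin m → ℝ) (θ : Fin n → Fin m) : ℝ := ∏ i, q (θ i)

/-- a direct signaling scheme: each state gets a probability distribution over the
`n` signals, signal `i` recommending action `i` -/
def IsScheme (φ : (Fin n → Fin m) → Fin n → ℝ) : Prop :=
  (∀ θ i, 0 ≤ φ θ i) ∧ ∀ θ, ∑ i, φ θ i = 1

/-- incentive compatibility: conditioned on each signal `i`, the recommended action `i`
maximizes the receiver's (type-determined) expected payoff -/
def IC (q ρ : Fin m → ℝ) (φ : (Fin n → Fin m) → Fin n → ℝ) : Prop :=
  ∀ i j : Fin n,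
    ∑ θ : Fin n → Fin m, prior q θ * φ θ i * ρ (θ j) ≤
      ∑ θ : Fin n → Fin m, prior q θ * φ θ i * ρ (θ i)

/-- expected sender utility when the receiver follows the recommendations -/
def senderUtil (q ξ : Fin m → ℝ) (φ : (Fin n → Fin m) → Fin n → ℝ) : ℝ :=
  ∑ θ : Fin n → Fin m, ∑ i, prior q θ * φ θ i * ξ (θ i)

/-- the signature of a scheme: `signature q φ i j k` is the joint probability that the
scheme sends signal `i` and action `j` has type `k` (entry `M^{σ_i}_{jk}`) -/
def signature (q : Fin m → ℝ) (φ : (Fin n → Fin m) → Fin n → ℝ)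
    (i j : Fin n) (k : Fin m) : ℝ :=
  ∑ θ : Fin n → Fin m, if θ j = k then prior q θ * φ θ i else 0

end IID

open IID

namespace IID

/-- `τ` is a realizable symmetric reduced form for a single-item auction with `n`
i.i.d. bidders, `m` types and type distribution `q`: there is a (randomized)
allocation rule `A` mapping type profiles to a winner in `[n] ∪ {*}` (`none` = no
allocation) such that for each bidder `i` and type `j`, the joint probability that
`i` has type `j` and receives the item equals `τ j * q j` (i.e. the conditional
probability that `i` receives the item given type `j` is `τ j`). -/
def RealizableReducedForm (n : ℕ) {m : ℕ} (q : Fin m → ℝ) (τ : Fin m → ℝ) : Prop :=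
  ∃ A : (Fin n → Fin m) → Option (Fin n) → ℝ,
    (∀ θ o, 0 ≤ A θ o) ∧ (∀ θ, ∑ o : Option (Fin n), A θ o = 1) ∧
    ∀ i j, (∑ θ : Fin n → Fin m, if θ i = j then prior q θ * A θ (some i) else 0)
      = τ j * q j

end IID

/-! A scheme is an allocation rule that always allocates: signal `i` means that bidder `i` wins.
Its diagonal signature is then the reduced form, every signal is sent with probability `‖x‖₁`,
whence (a), and summing the signature over the signals gives the marginal `q` of one coordinate,
whence (b). Conversely, by (a) a rule with reduced form `τ` allocates with total probability
`n ‖x‖₁ = 1`, so, the prior having full support, it never withholds the item and is a scheme with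
diagonal `x`. Averaging it over all relabellings of the bidders keeps the diagonal and makes all
off-diagonal entries equal, and then (b) forces them to be `y`. -/

namespace IID

open Equiv

variable {n m : ℕ}

section Prior

lemma prior_pos {q : Fin m → ℝ} (hq : ∀ k, 0 < q k) (θ : Fin n → Fin m) : 0 < prior q θ :=
  prod_pos fun i _ => hq (θ i)

lemma sum_prior (q : Fin m → ℝ) : ∑ θ : Fin n → Fin m, prior q θ = (∑ k, q k) ^ n :=
  (Fintype.sum_pow q n).symm

lemma prior_comp_perm (q : Fin m → ℝ) (θ : Fin n → Fin m) (π : Perm (Fin n)) :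
    prior q (θ ∘ π) = prior q θ :=
  Equiv.prod_comp π fun i => q (θ i)

lemma sum_comp_perm {M : Type*} [AddCommMonoid M] (f : (Fin n → Fin m) → M)
    (π : Perm (Fin n)) :
    ∑ θ : Fin n → Fin m, f (θ ∘ π) = ∑ θ, f θ :=
  Equiv.sum_comp (Equiv.arrowCongr π.symm (Equiv.refl (Fin m))) f

lemma sum_prior_ite_apply_eq (q : Fin m → ℝ) (j : Fin n) (k : Fin m) :
    ∑ θ : Fin n → Fin m, (if θ j = k then prior q θ else 0) = q k * (∑ v, q v) ^ (n - 1) := by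
  set f : Fin n → Fin m → ℝ := fun i v => if i = j then (if v = k then q v else 0) else q v
  have hfactor (θ : Fin n → Fin m) : (if θ j = k then prior q θ else 0) = ∏ i, f i (θ i) := by
    by_cases h : θ j = k
    · rw [if_pos h, prior]
      refine prod_congr rfl fun i _ => ?_
      by_cases hi : i = j <;> simp [f, hi, h]
    · rw [if_neg h, eq_comm]
      exact prod_eq_zero (mem_univ j) (by simp [f, h])
  simp_rw [hfactor, ← Fintype.prod_sum]
  have hrow (i : Fin n) : ∑ v, f i v = if i = j then q k else ∑ v, q v := by
    by_cases hi : i = j <;> simp [f, hi]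
  simp_rw [hrow]
  rw [prod_ite, filter_eq', filter_ne', if_pos (mem_univ j), prod_singleton, prod_const,
    card_erase_of_mem (mem_univ j), card_univ, Fintype.card_fin]

end Prior

section Signature

lemma signature_nonneg {q : Fin m → ℝ} (hq : ∀ k, 0 ≤ q k) {φ : (Fin n → Fin m) → Fin n → ℝ}
    (hφ : ∀ θ i, 0 ≤ φ θ i) (i j : Fin n) (k : Fin m) : 0 ≤ signature q φ i j k :=
  sum_nonneg fun θ _ => by
    split_ifs
    · exact mul_nonneg (prod_nonneg fun i _ => hq (θ i)) (hφ θ i)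
    · exact le_rfl

lemma sum_signature_type (q : Fin m → ℝ) (φ : (Fin n → Fin m) → Fin n → ℝ) (i j : Fin n) :
    ∑ k, signature q φ i j k = ∑ θ : Fin n → Fin m, prior q θ * φ θ i := by
  simp only [signature]
  rw [sum_comm]
  simp

lemma sum_sum_signature_diag (q : Fin m → ℝ) {φ : (Fin n → Fin m) → Fin n → ℝ}
    (hφ : ∀ θ, ∑ i, φ θ i = 1) :
    ∑ i, ∑ k, signature q φ i i k = (∑ k, q k) ^ n := by
  simp_rw [sum_signature_type]
  rw [sum_comm, ← sum_prior q]
  simp_rw [← mul_sum, hφ, mul_one]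

lemma sum_signature_signal (q : Fin m → ℝ) {φ : (Fin n → Fin m) → Fin n → ℝ}
    (hφ : ∀ θ, ∑ i, φ θ i = 1) (j : Fin n) (k : Fin m) :
    ∑ i, signature q φ i j k = q k * (∑ v, q v) ^ (n - 1) := by
  simp only [signature]
  rw [sum_comm, ← sum_prior_ite_apply_eq q j]
  refine sum_congr rfl fun θ _ => ?_
  split_ifs
  · rw [← mul_sum, hφ, mul_one]
  · exact sum_const_zero

end Signature

lemma exists_perm_apply_eq_apply_eq {α : Type*} [DecidableEq α] {i j i' j' : α} (hij : i ≠ j)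
    (hij' : i' ≠ j') : ∃ ρ : Perm α, ρ i = i' ∧ ρ j = j' := by
  set σ := swap i i'
  have hσj : σ j ≠ i' := fun h => hij (σ.injective (h.trans (swap_apply_left i i').symm)).symm
  refine ⟨swap (σ j) j' * σ, ?_, ?_⟩
  · rw [Perm.mul_apply, swap_apply_left]
    exact swap_apply_of_ne_of_ne hσj.symm hij'
  · rw [Perm.mul_apply, swap_apply_left]

lemma sum_perm_apply_pair_eq {α M : Type*} [Fintype α] [DecidableEq α] [AddCommMonoid M]
    (f : α → α → M) {i j i' j' : α} (hij : i ≠ j) (hij' : i' ≠ j') :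
    ∑ π : Perm α, f (π i) (π j) = ∑ π : Perm α, f (π i') (π j') := by
  obtain ⟨ρ, hi, hj⟩ := exists_perm_apply_eq_apply_eq hij' hij
  calc ∑ π : Perm α, f (π i) (π j) = ∑ π : Perm α, f ((π * ρ) i') ((π * ρ) j') := by
        simp only [Perm.mul_apply, hi, hj]
    _ = ∑ π : Perm α, f (π i') (π j') := Equiv.sum_comp (Equiv.mulRight ρ) fun π => f (π i') (π j')

lemma sum_eq_add_mul_of_ne {α : Type*} [Fintype α] [DecidableEq α] {f : α → ℝ} {j : α}
    {a b : ℝ} (hj : f j = a) (hoff : ∀ i, i ≠ j → f i = b) :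
    ∑ i, f i = a + (Fintype.card α - 1) * b := by
  rw [← add_sum_erase _ _ (mem_univ j), hj,
    sum_congr rfl fun i hi => hoff i (ne_of_mem_erase hi), sum_const,
    card_erase_of_mem (mem_univ j), card_univ, nsmul_eq_mul,
    Nat.cast_sub (Fintype.card_pos_iff.2 ⟨j⟩), Nat.cast_one]

section Scheme

variable {φ : (Fin n → Fin m) → Fin n → ℝ}

lemma IsScheme.pos (hφ : IsScheme φ) : 0 < n := by
  refine Nat.pos_of_ne_zero ?_
  rintro rfl
  simpa using hφ.2 Fin.elim0

lemma isScheme_of_sum_le_one {q : Fin m → ℝ} (hq0 : ∀ k, 0 < q k) (hq1 : ∑ k, q k = 1)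
    (hφ0 : ∀ θ i, 0 ≤ φ θ i) (hφ1 : ∀ θ, ∑ i, φ θ i ≤ 1)
    (hmass : ∑ i, ∑ θ : Fin n → Fin m, prior q θ * φ θ i = 1) : IsScheme φ := by
  refine ⟨hφ0, fun θ => ?_⟩
  have hdeficit : ∑ θ : Fin n → Fin m, prior q θ * (1 - ∑ i, φ θ i) = 0 := by
    simp_rw [mul_sub, mul_one, mul_sum]
    rw [sum_sub_distrib, sum_comm (f := fun θ i => prior q θ * φ θ i), hmass, sum_prior, hq1,
      one_pow, sub_self]
  have hθ := (sum_eq_zero_iff_of_nonneg fun θ _ =>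
    mul_nonneg (prior_pos hq0 θ).le (sub_nonneg.2 (hφ1 θ))).1 hdeficit θ (mem_univ θ)
  linarith [(mul_eq_zero.1 hθ).resolve_left (prior_pos hq0 θ).ne']

noncomputable def symmetrize (φ : (Fin n → Fin m) → Fin n → ℝ) : (Fin n → Fin m) → Fin n → ℝ :=
  fun θ i => (n.factorial : ℝ)⁻¹ * ∑ π : Perm (Fin n), φ (θ ∘ π) (π.symm i)

lemma IsScheme.symmetrize (hφ : IsScheme φ) : IsScheme (symmetrize φ) := by
  refine ⟨fun θ i => mul_nonneg (by positivity) (sum_nonneg fun π _ => hφ.1 _ _), fun θ => ?_⟩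
  have hπ (π : Perm (Fin n)) : ∑ i, φ (θ ∘ π) (π.symm i) = 1 := by
    rw [Equiv.sum_comp π.symm (φ (θ ∘ π)), hφ.2]
  simp only [IID.symmetrize]
  rw [← mul_sum, sum_comm]
  simp_rw [hπ]
  rw [sum_const, card_univ, Fintype.card_perm, Fintype.card_fin, nsmul_one]
  exact inv_mul_cancel₀ (by positivity)

lemma signature_symmetrize (q : Fin m → ℝ) (i j : Fin n) (k : Fin m) :
    signature q (symmetrize φ) i j k =
      (n.factorial : ℝ)⁻¹ * ∑ π : Perm (Fin n), signature q φ (π i) (π j) k := by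
  have hπ (π : Perm (Fin n)) :
      ∑ θ : Fin n → Fin m, (if θ j = k then prior q θ * φ (θ ∘ π) (π.symm i) else 0)
        = signature q φ (π.symm i) (π.symm j) k := by
    rw [← sum_comp_perm _ π.symm]
    refine sum_congr rfl fun θ _ => ?_
    simp [prior_comp_perm, Function.comp_assoc]
  have hθ (θ : Fin n → Fin m) : (if θ j = k then prior q θ * symmetrize φ θ i else 0) =
      (n.factorial : ℝ)⁻¹ *
        ∑ π : Perm (Fin n), (if θ j = k then prior q θ * φ (θ ∘ π) (π.symm i) else 0) := by
    split_ifs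
    · simp only [IID.symmetrize, mul_sum]
      exact sum_congr rfl fun _ _ => mul_left_comm _ _ _
    · simp
  rw [signature]
  simp_rw [hθ]
  rw [← mul_sum, sum_comm]
  simp_rw [hπ]
  congr 1
  exact Equiv.sum_comp (Equiv.inv (Perm (Fin n))) fun π => signature q φ (π i) (π j) k

lemma signature_symmetrize_diag {q : Fin m → ℝ} {k : Fin m} {c : ℝ}
    (hdiag : ∀ i, signature q φ i i k = c) (i : Fin n) :
    signature q (symmetrize φ) i i k = c := by
  rw [signature_symmetrize]
  simp_rw [hdiag]
  rw [sum_const, card_univ, Fintype.card_perm, Fintype.card_fin, nsmul_eq_mul,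
    inv_mul_cancel_left₀ (by positivity)]

lemma signature_symmetrize_offdiag (q : Fin m → ℝ) {i j i' j' : Fin n} (hij : i ≠ j)
    (hij' : i' ≠ j') (k : Fin m) :
    signature q (symmetrize φ) i j k = signature q (symmetrize φ) i' j' k := by
  rw [signature_symmetrize, signature_symmetrize,
    sum_perm_apply_pair_eq (fun a b => signature q φ a b k) hij hij']

end Scheme

lemma realizableReducedForm_of_isScheme {q τ : Fin m → ℝ} {φ : (Fin n → Fin m) → Fin n → ℝ}
    (hφ : IsScheme φ) (hdiag : ∀ i k, signature q φ i i k = τ k * q k) :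
    RealizableReducedForm n q τ := by
  refine ⟨fun θ o => o.elim 0 (φ θ), ?_, fun θ => ?_, hdiag⟩
  · rintro θ (_ | i)
    exacts [le_rfl, hφ.1 θ i]
  · simpa [Fintype.sum_option] using hφ.2 θ

lemma RealizableReducedForm.nonneg_mul {q τ : Fin m → ℝ} (hq : ∀ k, 0 ≤ q k) (hn : 0 < n)
    (h : RealizableReducedForm n q τ) (k : Fin m) : 0 ≤ τ k * q k := by
  obtain ⟨A, hA0, -, hAr⟩ := h
  rw [← hAr ⟨0, hn⟩ k]
  exact signature_nonneg hq (fun θ i => hA0 θ (some i)) _ _ k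

lemma RealizableReducedForm.exists_isScheme {q τ : Fin m → ℝ} (hq0 : ∀ k, 0 < q k)
    (hq1 : ∑ k, q k = 1) (h : RealizableReducedForm n q τ)
    (hmass : (n : ℝ) * ∑ k, τ k * q k = 1) :
    ∃ φ : (Fin n → Fin m) → Fin n → ℝ, IsScheme φ ∧ ∀ i k, signature q φ i i k = τ k * q k := by
  obtain ⟨A, hA0, hA1, hAr⟩ := h
  refine ⟨fun θ i => A θ (some i), ?_, hAr⟩
  refine isScheme_of_sum_le_one hq0 hq1 (fun θ i => hA0 θ (some i)) (fun θ => ?_) ?_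
  · have hθ := hA1 θ
    rw [Fintype.sum_option] at hθ
    linarith [hA0 θ none]
  · rw [sum_congr rfl fun i _ => (sum_signature_type q (fun θ i => A θ (some i)) i i).symm.trans
      (sum_congr rfl fun k _ => hAr i k), sum_const, card_univ, Fintype.card_fin, nsmul_eq_mul,
      hmass]

def RealizableSSignature (n : ℕ) {m : ℕ} (q x y : Fin m → ℝ) : Prop :=
  ∃ φ : (Fin n → Fin m) → Fin n → ℝ, IsScheme φ ∧
    (∀ i k, signature q φ i i k = x k) ∧ (∀ i j, j ≠ i → ∀ k, signature q φ i j k = y k)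

variable {q x y : Fin m → ℝ}

lemma RealizableSSignature.conditions (hq0 : ∀ k, 0 < q k) (hq1 : ∑ k, q k = 1)
    (h : RealizableSSignature n q x y) :
    (∑ k, |x k| = 1 / n) ∧ (∀ k, x k + ((n : ℝ) - 1) * y k = q k) ∧
      RealizableReducedForm n q (fun k => x k / q k) := by
  obtain ⟨φ, hφ, hdiag, hoff⟩ := h
  have hn := hφ.pos
  have hx0 (k : Fin m) : 0 ≤ x k :=
    hdiag ⟨0, hn⟩ k ▸ signature_nonneg (fun k => (hq0 k).le) hφ.1 _ _ k
  have hmass := sum_sum_signature_diag q hφ.2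
  simp_rw [hdiag, sum_const, card_univ, Fintype.card_fin, nsmul_eq_mul, hq1, one_pow] at hmass
  refine ⟨?_, fun k => ?_, ?_⟩
  · rw [sum_congr rfl fun k _ => abs_of_nonneg (hx0 k)]
    field_simp
    linarith
  · set j : Fin n := ⟨0, hn⟩
    have hcol := sum_signature_signal q hφ.2 j k
    rwa [hq1, one_pow, mul_one, sum_eq_add_mul_of_ne (f := fun i => signature q φ i j k)
      (hdiag j k) fun i hi => hoff i j hi.symm k, Fintype.card_fin] at hcol
  · exact realizableReducedForm_of_isScheme hφ fun i k =>
      (hdiag i k).trans (div_mul_cancel₀ _ (hq0 k).ne').symm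

lemma realizableSSignature_of_isScheme (hq1 : ∑ k, q k = 1) {φ : (Fin n → Fin m) → Fin n → ℝ}
    (hφ : IsScheme φ) (hdiag : ∀ i k, signature q φ i i k = x k)
    (hcol : ∀ k, x k + ((n : ℝ) - 1) * y k = q k) : RealizableSSignature n q x y := by
  refine ⟨symmetrize φ, hφ.symmetrize, fun i k => signature_symmetrize_diag (hdiag · k) i,
    fun i j hji k => ?_⟩
  have hsum := sum_signature_signal q hφ.symmetrize.2 j k
  rw [hq1, one_pow, mul_one, sum_eq_add_mul_of_ne (f := fun i' => signature q (symmetrize φ) i' j k)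
    (signature_symmetrize_diag (hdiag · k) j)
    (fun i' hi' => signature_symmetrize_offdiag q hi' hji.symm k), Fintype.card_fin, ← hcol k,
    add_right_inj] at hsum
  have hn1 : (n : ℝ) - 1 ≠ 0 := by
    have := Fintype.one_lt_card_iff.2 ⟨i, j, hji.symm⟩
    rw [Fintype.card_fin] at this
    exact sub_ne_zero.2 (by exact_mod_cast this.ne')
  exact mul_left_cancel₀ hn1 hsum

lemma realizableSSignature_of_conditions (hq0 : ∀ k, 0 < q k) (hq1 : ∑ k, q k = 1)
    (hy : ∀ k, 0 ≤ y k) (hnorm : ∑ k, |x k| = 1 / n)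
    (hcol : ∀ k, x k + ((n : ℝ) - 1) * y k = q k)
    (hA : RealizableReducedForm n q (fun k => x k / q k)) : RealizableSSignature n q x y := by
  have hn : 0 < n := by
    refine Nat.pos_of_ne_zero fun hn => ?_
    -- for `n = 0`, (a) reads `∑ k, |x k| = 0` as `1 / 0 = 0`, and (b) summed reads `∑ x - ∑ y = 1`
    have hsum : ∑ k, (x k + ((n : ℝ) - 1) * y k) = ∑ k, q k := sum_congr rfl fun k _ => hcol k
    rw [sum_add_distrib, ← mul_sum, hq1, hn] at hsum
    rw [hn] at hnorm
    norm_num at hnorm hsum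
    linarith [sum_le_sum (s := univ) fun k _ => le_abs_self (x k),
      sum_nonneg (s := univ) fun k _ => hy k]
  have hτ (k : Fin m) : x k / q k * q k = x k := div_mul_cancel₀ _ (hq0 k).ne'
  have hxsum : ∑ k, x k = 1 / n := by
    rw [← hnorm]
    refine sum_congr rfl fun k _ => (abs_of_nonneg ?_).symm
    exact hτ k ▸ hA.nonneg_mul (fun k => (hq0 k).le) hn k
  obtain ⟨φ, hφ, hdiag⟩ := hA.exists_isScheme hq0 hq1 (by
    simp_rw [hτ, hxsum]
    field_simp)
  simp_rw [hτ] at hdiag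
  exact realizableSSignature_of_isScheme hq1 hφ hdiag hcol

end IID

theorem s_signature_iff_reduced_form_general
    {n m : ℕ} (q : Fin m → ℝ) (hq0 : ∀ k, 0 < q k) (hq1 : ∑ k, q k = 1)
    (x y : Fin m → ℝ)
    (hy : ∀ k, y k ∈ Set.Icc (0 : ℝ) 1) :
    (∃ φ : (Fin n → Fin m) → Fin n → ℝ, IsScheme φ ∧
      (∀ i k, signature q φ i i k = x k) ∧
      (∀ i j, j ≠ i → ∀ k, signature q φ i j k = y k))
    ↔ ((∑ k, |x k| = 1 / n) ∧
        (∀ k, x k + ((n : ℝ) - 1) * y k = q k) ∧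
        RealizableReducedForm n q (fun k => x k / q k)) := by
  exact ⟨RealizableSSignature.conditions hq0 hq1, fun ⟨hnorm, hcol, hA⟩ =>
    realizableSSignature_of_conditions hq0 hq1 (fun k => (hy k).1) hnorm hcol hA⟩

/-- for `(x, y) ∈ [0,1]^m × [0,1]^m` and `τ = (x₁/q₁, …, x_m/q_m)`,
the pair `(x, y)` is a realizable s-signature iff (a) `‖x‖₁ = 1/n`,
(b) `x + (n−1)y = q`, and (c) `τ` is a realizable symmetric reduced form of an
allocation rule with `n` i.i.d. bidders, `m` types and type distribution `q`. -/
theorem s_signature_iff_reduced_form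
    {n m : ℕ} (q : Fin m → ℝ) (hq0 : ∀ k, 0 < q k) (hq1 : ∑ k, q k = 1)
    (x y : Fin m → ℝ)
    (hx : ∀ k, x k ∈ Set.Icc (0 : ℝ) 1) (hy : ∀ k, y k ∈ Set.Icc (0 : ℝ) 1) :
    (∃ φ : (Fin n → Fin m) → Fin n → ℝ, IsScheme φ ∧
      (∀ i k, signature q φ i i k = x k) ∧
      (∀ i j, j ≠ i → ∀ k, signature q φ i j k = y k))
    ↔ ((∑ k, |x k| = 1 / n) ∧
        (∀ k, x k + ((n : ℝ) - 1) * y k = q k) ∧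
        RealizableReducedForm n q (fun k => x k / q k)) :=
  s_signature_iff_reduced_form_general q hq0 hq1 x y hy
end

section
/- In the setting of the composed scheme: let λ be a finitely supported distribution on states with n actions, fix K ≥ 1, let F map each K-tuple of states to a direct scheme on indices [K], and define φ on input θ by drawing ℓ uniform in [K], drawing θ_k ~ λ i.i.d. for k ≠ ℓ, setting θ_ℓ = θ, and outputting a signal from F(θ_1,…,θ_K)(ℓ). If the receiver follows the recommendations of φ, then the expected sender utility of φ when θ ~ λ equals the expectation, over K i.i.d. draws (θ_1,…,θ_K) from λ, of the empirical sender utility (1/K) Σ_{k=1}^K Σ_{i=1}^n F(θ_1,…,θ_K)(k)(σ_i) · s_i(θ_k). -/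
/-! For a fixed coordinate `ℓ`, drawing `θ ~ λ`, planting it at `ℓ` and filling the other
coordinates i.i.d. from `λ` produces a tuple distributed as `λ^K`. Hence the utility collected
from coordinate `ℓ` is the expectation of the `ℓ`-th term of the empirical utility, and averaging
over the uniform `ℓ` gives the claim. -/

open Finset

namespace Persuasion

variable {Θ : Type*} [Fintype Θ] {n : ℕ}

/-- `μ` is a probability distribution on the finite type `Θ`. -/
def IsDist (μ : Θ → ℝ) : Prop := (∀ θ, 0 ≤ μ θ) ∧ ∑ θ, μ θ = 1

/-- a direct signaling scheme: a probability distribution over the `n` signals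
(signal `i` recommending action `i`) for each state -/
def IsScheme (φ : Θ → Fin n → ℝ) : Prop :=
  (∀ θ i, 0 ≤ φ θ i) ∧ ∀ θ, ∑ i, φ θ i = 1

/-- `ε`-incentive compatibility of a direct scheme for the distribution `μ`
(`ε = 0` gives exact incentive compatibility) -/
def EIC (μ : Θ → ℝ) (r : Θ → Fin n → ℝ) (ε : ℝ) (φ : Θ → Fin n → ℝ) : Prop :=
  ∀ i j : Fin n,
    ∑ θ, μ θ * φ θ i * (r θ j - ε) ≤ ∑ θ, μ θ * φ θ i * r θ i

/-- expected sender utility of a direct scheme under `μ`, assuming the receiver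
follows the recommendations -/
def senderUtil (μ : Θ → ℝ) (s : Θ → Fin n → ℝ) (φ : Θ → Fin n → ℝ) : ℝ :=
  ∑ θ, ∑ i, μ θ * φ θ i * s θ i

end Persuasion

open Persuasion

namespace Persuasion

/-- the composed scheme of Algorithm 2: on input `θ`, draw `ℓ` uniformly from `[K]`,
draw `θ_k ~ lam` i.i.d. for `k ≠ ℓ`, set `θ_ℓ = θ`, and output a signal drawn from
`F (θ_1, …, θ_K) ℓ`.  `composed lam F θ i` is the overall probability that signal `i`
is output on input `θ`. -/
noncomputable def composed {Θ : Type*} [Fintype Θ] [DecidableEq Θ] {n K : ℕ}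
    (lam : Θ → ℝ) (F : (Fin K → Θ) → Fin K → Fin n → ℝ) (θ : Θ) (i : Fin n) : ℝ :=
  (1 / (K : ℝ)) * ∑ l : Fin K, ∑ v : Fin K → Θ,
    (if v l = θ then ∏ k ∈ Finset.univ.erase l, lam (v k) else 0) * F v l i

end Persuasion

namespace Persuasion

theorem sum_mul_sum_ite_prod_erase {Θ ι : Type*} [Fintype Θ] [DecidableEq Θ] [Fintype ι]
    [DecidableEq ι] (lam : Θ → ℝ) (l : ι) (g : (ι → Θ) → Θ → ℝ) :
    ∑ θ, lam θ * ∑ v : ι → Θ, (if v l = θ then ∏ k ∈ univ.erase l, lam (v k) else 0) * g v θ =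
      ∑ v : ι → Θ, (∏ k, lam (v k)) * g v (v l) := by
  simp_rw [mul_sum]
  rw [sum_comm]
  refine sum_congr rfl fun v _ => ?_
  simp_rw [ite_mul, zero_mul, mul_ite, mul_zero, sum_ite_eq, if_pos (mem_univ _),
    ← mul_prod_erase univ (fun k => lam (v k)) (mem_univ l)]
  ring

theorem sum_composed_mul {Θ : Type*} [Fintype Θ] [DecidableEq Θ] {n K : ℕ}
    (lam : Θ → ℝ) (s : Θ → Fin n → ℝ) (F : (Fin K → Θ) → Fin K → Fin n → ℝ) (θ : Θ) :
    ∑ i, composed lam F θ i * s θ i =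
      (1 / (K : ℝ)) * ∑ l : Fin K, ∑ v : Fin K → Θ,
        (if v l = θ then ∏ k ∈ univ.erase l, lam (v k) else 0) * ∑ i, F v l i * s θ i := by
  simp only [composed, mul_sum, sum_mul]
  rw [sum_comm]
  refine sum_congr rfl fun l _ => ?_
  rw [sum_comm]
  exact sum_congr rfl fun v _ => sum_congr rfl fun i _ => by ring

end Persuasion

theorem composed_scheme_utility_general
    {Θ : Type*} [Fintype Θ] [DecidableEq Θ] {n K : ℕ}
    (lam : Θ → ℝ)
    (s : Θ → Fin n → ℝ)
    (F : (Fin K → Θ) → Fin K → Fin n → ℝ) :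
    ∑ θ, lam θ * ∑ i, composed lam F θ i * s θ i =
      ∑ v : Fin K → Θ, (∏ k, lam (v k)) *
        ((1 / (K : ℝ)) * ∑ k, ∑ i, F v k i * s (v k) i) := by
  calc ∑ θ, lam θ * ∑ i, composed lam F θ i * s θ i
      = (1 / (K : ℝ)) * ∑ l : Fin K, ∑ θ, lam θ * ∑ v : Fin K → Θ,
          (if v l = θ then ∏ k ∈ univ.erase l, lam (v k) else 0) * ∑ i, F v l i * s θ i := by
        simp only [sum_composed_mul, mul_left_comm (lam _) (1 / (K : ℝ))]
        rw [← mul_sum]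
        congr 1
        simp only [mul_sum]
        exact sum_comm
    _ = (1 / (K : ℝ)) * ∑ l : Fin K, ∑ v : Fin K → Θ,
          (∏ k, lam (v k)) * ∑ i, F v l i * s (v l) i := by
        simp only [sum_mul_sum_ite_prod_erase lam _ fun v θ => ∑ i, F v _ i * s θ i]
    _ = _ := by
        simp only [mul_sum]
        rw [sum_comm]
        exact sum_congr rfl fun v _ => sum_congr rfl fun l _ => sum_congr rfl fun i _ => by ring

/-- if the receiver follows the recommendations of the composed
scheme, then its expected sender utility under `lam` equals the expectation, over `K`
i.i.d. draws from `lam`, of the empirical sender utility of the scheme produced by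
`F` on the sampled tuple. -/
theorem composed_scheme_utility
    {Θ : Type*} [Fintype Θ] [DecidableEq Θ] {n K : ℕ} (hK : 1 ≤ K)
    (lam : Θ → ℝ) (hlam : IsDist lam)
    (s : Θ → Fin n → ℝ)
    (F : (Fin K → Θ) → Fin K → Fin n → ℝ)
    (hF : ∀ v k, (∀ i, 0 ≤ F v k i) ∧ ∑ i, F v k i = 1) :
    ∑ θ, lam θ * ∑ i, composed lam F θ i * s θ i =
      ∑ v : Fin K → Θ, (∏ k, lam (v k)) *
        ((1 / (K : ℝ)) * ∑ k, ∑ i, F v k i * s (v k) i) :=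
  composed_scheme_utility_general lam s F
end
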